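/- Let G₁ be the graph with vertices v, v₁, v₂, v₃, v₄ and edges e₁ = vv₁, e₂ = vv₂, e₃ = vv₃, e₄ = vv₄, e₅ = v₃v₄, e₆ = v₁v₂. Let A be an Abelian group with |A| ≥ 4 and L a list assignment on the edges of G₁ with |L(e₅)| = 2, |L(e₆)| = 1, |L(e₁)| = 3, and |L(e_i)| = 4 for i = 2,3,4. Then for every function f assigning elements of A to oriented adjacencies of the line graph of G₁, there exists a coloring c of the edges with c(e) ∈ L(e) for each edge e, and c(e) − c(e') ≠ f(e e') for all adjacent edges e, e'. -/
import Mathlib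


open SimpleGraph

/-- A graph `H` is `k`-group choosable if for every (additive) Abelian group `A` of order at
least `k`, every list assignment giving each vertex a `k`-element subset of `A`, and every
"forbidden difference" function `f` on oriented edges (encoded as an antisymmetric function
on ordered pairs of vertices, which is equivalent to fixing an orientation), there is a list
coloring `c` with `c x - c y ≠ f x y` for every edge `xy`. -/
def GroupChoosable {W : Type} (H : SimpleGraph W) (k : ℕ) : Prop :=
  ∀ (A : Type) [AddCommGroup A] [Fintype A], k ≤ Fintype.card A →
    ∀ L : W → Finset A, (∀ v, (L v).card = k) →
      ∀ f : W → W → A, (∀ x y, f x y = - f y x) →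
        ∃ c : W → A, (∀ v, c v ∈ L v) ∧ ∀ ⦃x y⦄, H.Adj x y → c x - c y ≠ f x y

/-- The group choice number of a graph: the least `k` such that it is `k`-group choosable. -/
noncomputable def groupChoiceNumber {W : Type} (H : SimpleGraph W) : ℕ :=
  sInf {k | GroupChoosable H k}

/-- `G` is edge-`k`-group choosable if its line graph is `k`-group choosable. -/
def EdgeGroupChoosable {V : Type} (G : SimpleGraph V) (k : ℕ) : Prop :=
  GroupChoosable G.lineGraph k

/-- The group-choice index of `G`: the group choice number of its line graph. -/
noncomputable def groupChoiceIndex {V : Type} (G : SimpleGraph V) : ℕ :=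
  groupChoiceNumber G.lineGraph

/-- The graph `G₁`: a vertex `v = 0` joined to `v₁ = 1, v₂ = 2, v₃ = 3, v₄ = 4`, together with
the edges `v₃v₄` and `v₁v₂`. -/
def G1 : SimpleGraph (Fin 5) :=
  SimpleGraph.fromEdgeSet
    {s(0, 1), s(0, 2), s(0, 3), s(0, 4), s(3, 4), s(1, 2)}


section Key
variable {A : Type} [AddCommGroup A] [DecidableEq A]

lemma pick_notin {s t : Finset A} (h : t.card < s.card) : ∃ x ∈ s, x ∉ t := by
  by_contra hc
  push_neg at hc
  exact absurd (Finset.card_le_card hc) (not_le.mpr h)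

lemma pick1 {s : Finset A} (x : A) (h : 2 ≤ s.card) : ∃ v ∈ s, v ≠ x := by
  have hc : ({x} : Finset A).card < s.card := by simp; omega
  obtain ⟨v, hv, hn⟩ := pick_notin hc
  exact ⟨v, hv, by simpa using hn⟩

lemma pick2 {s : Finset A} (x y : A) (h : 3 ≤ s.card) : ∃ v ∈ s, v ≠ x ∧ v ≠ y := by
  have hc : ({x, y} : Finset A).card < s.card := by
    have h2 : ({x, y} : Finset A).card ≤ 2 := (Finset.card_insert_le _ _).trans (by simp)
    omega
  obtain ⟨v, hv, hn⟩ := pick_notin hc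
  simp only [Finset.mem_insert, Finset.mem_singleton, not_or] at hn
  exact ⟨v, hv, hn⟩

lemma pick3 {s : Finset A} (x y z : A) (h : 4 ≤ s.card) : ∃ v ∈ s, v ≠ x ∧ v ≠ y ∧ v ≠ z := by
  have hc : ({x, y, z} : Finset A).card < s.card := by
    have h2 : ({y, z} : Finset A).card ≤ 2 := (Finset.card_insert_le _ _).trans (by simp)
    have h3 : ({x, y, z} : Finset A).card ≤ 3 := (Finset.card_insert_le _ _).trans (by omega)
    omega
  obtain ⟨v, hv, hn⟩ := pick_notin hc
  simp only [Finset.mem_insert, Finset.mem_singleton, not_or] at hn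
  exact ⟨v, hv, hn⟩

lemma key (L1 L2 L3 L4 L5 : Finset A)
    (h1 : L1.card = 3) (h2 : L2.card = 4) (h3 : L3.card = 4) (h4 : L4.card = 4)
    (h5 : L5.card = 2) (b1 b2 p1 p3 p4 q1 q4 q5 r1 r5 : A) :
    ∃ c1 c2 c3 c4 c5 : A, c1 ∈ L1 ∧ c2 ∈ L2 ∧ c3 ∈ L3 ∧ c4 ∈ L4 ∧ c5 ∈ L5 ∧
      c1 ≠ b1 ∧ c2 ≠ b2 ∧ c2 ≠ c1 + p1 ∧ c2 ≠ c3 + p3 ∧ c2 ≠ c4 + p4 ∧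
      c3 ≠ c1 + q1 ∧ c3 ≠ c4 + q4 ∧ c3 ≠ c5 + q5 ∧ c4 ≠ c1 + r1 ∧ c4 ≠ c5 + r5 := by
  by_cases hb2 : b2 ∈ L2
  · by_cases hC1 : ∃ a ∈ L1, a ≠ b1 ∧ (a + p1 ∉ L2 ∨ a + p1 = b2)
    · obtain ⟨c1, hc1, hc1b, hd⟩ := hC1
      obtain ⟨c5, hc5⟩ := Finset.card_pos.mp (show 0 < L5.card by omega)
      obtain ⟨c4, hc4, h41, h45⟩ := pick2 (s := L4) (c1 + r1) (c5 + r5) (by omega)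
      obtain ⟨c3, hc3, h31, h34, h35⟩ := pick3 (s := L3) (c1 + q1) (c4 + q4) (c5 + q5) (by omega)
      obtain ⟨c2, hc2, h2b, h23, h24⟩ := pick3 (s := L2) b2 (c3 + p3) (c4 + p4) (by omega)
      refine ⟨c1, c2, c3, c4, c5, hc1, hc2, hc3, hc4, hc5, hc1b, h2b, ?_, h23, h24,
        h31, h34, h35, h41, h45⟩
      rcases hd with hd | hd
      · exact fun h => hd (h ▸ hc2)
      · exact fun h => h2b (h.trans hd)
    · by_cases hC4 : ∃ a ∈ L1, a ≠ b1 ∧ ∃ s ∈ L5, ∃ v ∈ L4, v ≠ a + r1 ∧ v ≠ s + r5 ∧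
          (v + p4 ∉ L2 ∨ v + p4 = b2 ∨ v + p4 = a + p1)
      · obtain ⟨c1, hc1, hc1b, c5, hc5, c4, hc4, h41, h45, hd⟩ := hC4
        obtain ⟨c3, hc3, h31, h34, h35⟩ := pick3 (s := L3) (c1 + q1) (c4 + q4) (c5 + q5) (by omega)
        obtain ⟨c2, hc2, h2b, h21, h23⟩ := pick3 (s := L2) b2 (c1 + p1) (c3 + p3) (by omega)
        refine ⟨c1, c2, c3, c4, c5, hc1, hc2, hc3, hc4, hc5, hc1b, h2b, h21, h23, ?_,
          h31, h34, h35, h41, h45⟩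
        rcases hd with hd | hd | hd
        · exact fun h => hd (h ▸ hc2)
        · exact fun h => h2b (h.trans hd)
        · exact fun h => h21 (h.trans hd)
      · exfalso
        push_neg at hC1 hC4
        -- H1 : ∀ a ∈ L1, a ≠ b1 → a + p1 ∈ L2 ∧ a + p1 ≠ b2
        -- H4 : ∀ a ∈ L1, a ≠ b1 → ∀ s ∈ L5, ∀ v ∈ L4, v ≠ a+r1 → v ≠ s+r5 →
        --        v+p4 ∈ L2 ∧ v+p4 ≠ b2 ∧ v+p4 ≠ a+p1
        obtain ⟨a, ha, hane⟩ := pick1 (s := L1) b1 (by omega)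
        obtain ⟨hap1, hapb⟩ := hC1 a ha hane
        obtain ⟨s, hs, s', hs', hss'⟩ := Finset.one_lt_card.mp (by omega : 1 < L5.card)
        have step : ∀ σ ∈ L5, (a + r1 ∈ L4 ∧ σ + r5 ∈ L4 ∧ a + r1 ≠ σ + r5) ∧
            ∀ x, x ∈ L2 → x ≠ b2 → x ≠ a + p1 →
              (x - p4 ∈ L4 ∧ x - p4 ≠ a + r1 ∧ x - p4 ≠ σ + r5) := by
          intro σ hσ
          set Q := (L4.erase (a + r1)).erase (σ + r5) with hQdef
          set W := (L2.erase b2).erase (a + p1) with hWdef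
          have hWcard : W.card = 2 := by
            rw [hWdef, Finset.card_erase_of_mem (Finset.mem_erase.mpr ⟨hapb, hap1⟩),
              Finset.card_erase_of_mem hb2, h2]
          have himg : Q.image (· + p4) ⊆ W := by
            intro x hx
            obtain ⟨v, hv, hvx⟩ := Finset.mem_image.mp hx
            have hv5 : v ≠ σ + r5 := (Finset.mem_erase.mp hv).1
            have hv1 : v ≠ a + r1 := (Finset.mem_erase.mp (Finset.mem_erase.mp hv).2).1
            have hv4 : v ∈ L4 := (Finset.mem_erase.mp (Finset.mem_erase.mp hv).2).2
            obtain ⟨hx2, hxb, hxp⟩ := hC4 a ha hane σ hσ v hv4 hv1 hv5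
            rw [hvx] at hx2 hxb hxp
            exact Finset.mem_erase.mpr ⟨hxp, Finset.mem_erase.mpr ⟨hxb, hx2⟩⟩
          have hQle : Q.card ≤ 2 := by
            calc Q.card = (Q.image (· + p4)).card :=
                  (Finset.card_image_of_injective _ (add_left_injective p4)).symm
              _ ≤ W.card := Finset.card_le_card himg
              _ = 2 := hWcard
          have hmem1 : a + r1 ∈ L4 := by
            by_contra hn
            rw [hQdef, Finset.erase_eq_of_notMem hn] at hQle
            have := Finset.pred_card_le_card_erase (s := L4) (a := σ + r5)
            omega
          have hmem2 : σ + r5 ∈ L4 := by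
            by_contra hn
            have hn' : σ + r5 ∉ L4.erase (a + r1) := fun h => hn (Finset.mem_of_mem_erase h)
            rw [hQdef, Finset.erase_eq_of_notMem hn'] at hQle
            have := Finset.pred_card_le_card_erase (s := L4) (a := a + r1)
            omega
          have hne15 : a + r1 ≠ σ + r5 := by
            intro h
            rw [hQdef, ← h, Finset.erase_idem] at hQle
            have := Finset.pred_card_le_card_erase (s := L4) (a := a + r1)
            omega
          have hQcard : Q.card = 2 := by
            refine le_antisymm hQle ?_
            rw [hQdef, Finset.card_erase_of_mem
                (Finset.mem_erase.mpr ⟨fun h => hne15 h.symm, hmem2⟩),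
              Finset.card_erase_of_mem hmem1, h4]
          have heq : Q.image (· + p4) = W :=
            Finset.eq_of_subset_of_card_le himg
              (by rw [hWcard, Finset.card_image_of_injective _ (add_left_injective p4), hQcard])
          refine ⟨⟨hmem1, hmem2, hne15⟩, ?_⟩
          intro x hx1 hx2 hx3
          have hxW : x ∈ W := Finset.mem_erase.mpr ⟨hx3, Finset.mem_erase.mpr ⟨hx2, hx1⟩⟩
          rw [← heq] at hxW
          obtain ⟨v, hv, hvx⟩ := Finset.mem_image.mp hxW
          have hvval : v = x - p4 := by rw [← hvx]; exact (add_sub_cancel_right v p4).symm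
          rw [hvval] at hv
          exact ⟨(Finset.mem_erase.mp (Finset.mem_erase.mp hv).2).2,
            (Finset.mem_erase.mp (Finset.mem_erase.mp hv).2).1,
            (Finset.mem_erase.mp hv).1⟩
        obtain ⟨F1, _⟩ := step s hs
        obtain ⟨F1', _⟩ := step s' hs'
        have hne55 : s' + r5 ≠ s + r5 := fun h => hss' (add_right_cancel h).symm
        obtain ⟨hL2m, hnb2, hnap⟩ :=
          hC4 a ha hane s hs (s' + r5) F1'.2.1 (fun h => F1'.2.2 h.symm) hne55
        have := ((step s' hs').2 (s' + r5 + p4) hL2m hnb2 hnap).2.2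
        exact this (add_sub_cancel_right _ _)
  · obtain ⟨c1, hc1, hc1b⟩ := pick1 (s := L1) b1 (by omega)
    obtain ⟨c5, hc5⟩ := Finset.card_pos.mp (show 0 < L5.card by omega)
    obtain ⟨c4, hc4, h41, h45⟩ := pick2 (s := L4) (c1 + r1) (c5 + r5) (by omega)
    obtain ⟨c3, hc3, h31, h34, h35⟩ := pick3 (s := L3) (c1 + q1) (c4 + q4) (c5 + q5) (by omega)
    obtain ⟨c2, hc2, h21, h23, h24⟩ := pick3 (s := L2) (c1 + p1) (c3 + p3) (c4 + p4) (by omega)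
    exact ⟨c1, c2, c3, c4, c5, hc1, hc2, hc3, hc4, hc5, hc1b,
      fun h => hb2 (h ▸ hc2), h21, h23, h24, h31, h34, h35, h41, h45⟩

end Key

lemma neA {A : Type} [AddCommGroup A] {a b g : A} (h : b ≠ a + g) : b - a ≠ g :=
  fun H => h (sub_eq_iff_eq_add'.mp H)

lemma neB {A : Type} [AddCommGroup A] {a b g : A} (h : b ≠ a + g) : a - b ≠ -g :=
  fun H => neA h (by rw [← neg_sub a b, H, neg_neg])

/-- Lemma on `G₁`: with lists of sizes `3, 4, 4, 4, 2, 1` on the edges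
`e₁ = vv₁, e₂ = vv₂, e₃ = vv₃, e₄ = vv₄, e₅ = v₃v₄, e₆ = v₁v₂` respectively, from an Abelian
group of order at least 4, every forbidden-difference function on adjacent edges can be
avoided by a list coloring of the edges. -/
theorem stmt (A : Type) [AddCommGroup A] [Fintype A] (hA : 4 ≤ Fintype.card A)
    (L : Sym2 (Fin 5) → Finset A)
    (h1 : (L s(0, 1)).card = 3) (h2 : (L s(0, 2)).card = 4)
    (h3 : (L s(0, 3)).card = 4) (h4 : (L s(0, 4)).card = 4)
    (h5 : (L s(3, 4)).card = 2) (h6 : (L s(1, 2)).card = 1)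
    (f : Sym2 (Fin 5) → Sym2 (Fin 5) → A) (hf : ∀ e e', f e e' = - f e' e) :
    ∃ c : Sym2 (Fin 5) → A, (∀ e ∈ G1.edgeSet, c e ∈ L e) ∧
      ∀ e ∈ G1.edgeSet, ∀ e' ∈ G1.edgeSet,
        e ≠ e' → (∃ w, w ∈ e ∧ w ∈ e') → c e - c e' ≠ f e e' := by
  classical
  obtain ⟨t, ht⟩ := Finset.card_eq_one.mp h6
  obtain ⟨c1, c2, c3, c4, c5, m1, m2, m3, m4, m5, n1b, n2b, n21, n23, n24, n31, n34, n35,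
      n41, n45⟩ :=
    key (L s(0, 1)) (L s(0, 2)) (L s(0, 3)) (L s(0, 4)) (L s(3, 4)) h1 h2 h3 h4 h5
      (t + f s(0, 1) s(1, 2)) (t + f s(0, 2) s(1, 2))
      (f s(0, 2) s(0, 1)) (f s(0, 2) s(0, 3)) (f s(0, 2) s(0, 4))
      (f s(0, 3) s(0, 1)) (f s(0, 3) s(0, 4)) (f s(0, 3) s(3, 4))
      (f s(0, 4) s(0, 1)) (f s(0, 4) s(3, 4))
  obtain ⟨cc, E1, E2, E3, E4, E5, E6⟩ : ∃ cc : Sym2 (Fin 5) → A,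
      cc s(0, 1) = c1 ∧ cc s(0, 2) = c2 ∧ cc s(0, 3) = c3 ∧ cc s(0, 4) = c4 ∧
      cc s(3, 4) = c5 ∧ cc s(1, 2) = t :=
    ⟨fun e => if e = s(0, 1) then c1 else if e = s(0, 2) then c2 else if e = s(0, 3) then c3
      else if e = s(0, 4) then c4 else if e = s(3, 4) then c5 else t,
      rfl,
      rfl,
      rfl,
      rfl,
      rfl,
      rfl⟩
  have mem6 : ∀ e ∈ G1.edgeSet, e = s(0, 1) ∨ e = s(0, 2) ∨ e = s(0, 3) ∨ e = s(0, 4) ∨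
      e = s(3, 4) ∨ e = s(1, 2) := by
    intro e he
    rw [G1, SimpleGraph.edgeSet_fromEdgeSet] at he
    simpa using he.1
  refine ⟨cc, ?_, ?_⟩
  · intro e he
    rcases mem6 e he with rfl | rfl | rfl | rfl | rfl | rfl
    · rw [E1]; exact m1
    · rw [E2]; exact m2
    · rw [E3]; exact m3
    · rw [E4]; exact m4
    · rw [E5]; exact m5
    · rw [E6, ht]; exact Finset.mem_singleton_self t
  · intro e he e' he' hne hsh
    rcases mem6 e he with rfl | rfl | rfl | rfl | rfl | rfl <;>
      rcases mem6 e' he' with rfl | rfl | rfl | rfl | rfl | rfl <;>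
      simp only [E1, E2, E3, E4, E5, E6] <;>
      first
        | exact absurd rfl hne
        | exact absurd hsh (by decide)
        | exact neA n21
        | exact neA n23
        | exact neA n24
        | exact neA n31
        | exact neA n34
        | exact neA n35
        | exact neA n41
        | exact neA n45
        | exact neA n1b
        | exact neA n2b
        | (rw [hf]
           first
             | exact neB n21
             | exact neB n23
             | exact neB n24
             | exact neB n31
             | exact neB n34
             | exact neB n35
             | exact neB n41
             | exact neB n45
             | exact neB n1b
             | exact neB n2b)
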